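/- arXiv:1601.02037 — 2 statements merged into one kernel-verified Lean document; each statement's English description precedes it below -/
import Mathlib

section
/- Let X be a real Banach space, Y a closed subspace of X, and π : X → X/Y the quotient map. Let κ be an infinite cardinal such that the quotient Banach space X/Y has a dense subset of cardinality at most κ. Then there exist closed subspaces Y• and X• of X with Y• ⊆ Y, Y• ⊆ X•, such that: Y• has a dense subset of cardinality at most κ, π maps X• onto all of X/Y, and X• ∩ Y = Y• (equivalently, the kernel of the restriction of π to X• equals Y•, so that X•/Y• is isomorphic to X/Y). -/
/-!
Lift every element of a dense additive subgroup `K ⊆ X/Y` of cardinality `≤ κ` with norm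
control (open mapping theorem), and let `X•` be the closed span of these lifts. Since `X•` is
complete, the usual successive-approximation argument upgrades "onto `K` with norm control" to
"onto `closure K = X/Y`". The rational combinations of the lifts are dense in `X•`, so `X•`, and
hence its subset `Y• := X• ∩ Y`, has a dense subset of cardinality `≤ κ`.
-/

open Cardinal Set

lemma AddSubgroup.cardinalMk_closure_le_max {M : Type*} [AddCommGroup M] (s : Set M) :
    #(AddSubgroup.closure s) ≤ max #s ℵ₀ := by
  rw [← Submodule.span_int_eq_addSubgroupClosure]
  have hsurj := (Finsupp.linearCombination ℤ ((↑) : s → M)).surjective_rangeRestrict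
  have hle := mk_le_of_surjective hsurj
  rw [Finsupp.range_linearCombination, Subtype.range_coe] at hle
  refine hle.trans ?_
  rcases finite_or_infinite s with hs | hs
  · exact mk_le_aleph0.trans (le_max_right _ _)
  · rw [mk_finsupp_lift_of_infinite, lift_uzero, mk_int, lift_aleph0]

lemma exists_subset_dense_cardinalMk_le {E : Type*} [PseudoMetricSpace E] {κ : Cardinal}
    (hκ : ℵ₀ ≤ κ) {s t : Set E} (hts : t ⊆ closure s) (hs : #s ≤ κ) :
    ∃ u ⊆ t, #u ≤ κ ∧ t ⊆ closure u := by
  -- one point of `t` near each `x ∈ s` at each scale `1 / (n + 1)`, whenever there is one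
  let P (p : s × ℕ) : Prop := (t ∩ Metric.ball (p.1 : E) (1 / (p.2 + 1))).Nonempty
  choose f hft hfball using fun p : Subtype P => p.2
  refine ⟨range f, range_subset_iff.2 hft, ?_, ?_⟩
  · calc #(range f) ≤ #(s × ℕ) := mk_range_le.trans (mk_subtype_le _)
      _ = #s * ℵ₀ := by rw [mk_prod, lift_uzero, mk_nat, lift_aleph0]
      _ ≤ κ * κ := mul_le_mul' hs hκ
      _ = κ := mul_eq_self hκ
  · intro y hy
    rw [Metric.mem_closure_iff]
    intro ε hε
    obtain ⟨n, hn⟩ := exists_nat_one_div_lt (half_pos hε)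
    obtain ⟨x, hx, hyx⟩ := Metric.mem_closure_iff.1 (hts hy) (1 / (n + 1)) (by positivity)
    let p : Subtype P := ⟨(⟨x, hx⟩, n), y, hy, hyx⟩
    have hfx : dist (f p) x < 1 / (n + 1) := hfball p
    refine ⟨f p, mem_range_self p, ?_⟩
    linarith [dist_triangle_right y (f p) x]

section RatSpan

variable {E : Type*} [AddCommGroup E] [Module ℝ E]

/-- The `ℚ`-span of `S`, as an additive subgroup: a real vector space carries no `Module ℚ`
instance. -/
def ratSpan (S : Set E) : AddSubgroup E :=
  AddSubgroup.closure (range fun p : ℚ × S => (p.1 : ℝ) • (p.2 : E))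

lemma cardinalMk_ratSpan_le (S : Set E) : #(ratSpan S) ≤ max #S ℵ₀ := by
  refine (AddSubgroup.cardinalMk_closure_le_max _).trans (max_le ?_ (le_max_right _ _))
  calc #(range fun p : ℚ × S => (p.1 : ℝ) • (p.2 : E)) ≤ #(ℚ × S) := mk_range_le
    _ = ℵ₀ * #S := by rw [mk_prod, Cardinal.mkRat, lift_aleph0, lift_uzero]
    _ ≤ max (max ℵ₀ #S) ℵ₀ := mul_le_max _ _
    _ = max #S ℵ₀ := by rw [max_comm ℵ₀, max_assoc, max_self]

lemma rat_smul_mem_ratSpan (S : Set E) (q : ℚ) {x : E} (hx : x ∈ ratSpan S) :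
    (q : ℝ) • x ∈ ratSpan S := by
  have hmap : (ratSpan S).map (DistribSMul.toAddMonoidHom E (q : ℝ)) ≤ ratSpan S := by
    rw [ratSpan, AddMonoidHom.map_closure, AddSubgroup.closure_le]
    rintro _ ⟨_, ⟨⟨q', y⟩, rfl⟩, rfl⟩
    exact AddSubgroup.subset_closure ⟨(q * q', y), by simp [mul_smul]⟩
  exact hmap ⟨x, hx, rfl⟩

variable [TopologicalSpace E] [IsTopologicalAddGroup E] [ContinuousSMul ℝ E]

def ratSpanClosure (S : Set E) : Submodule ℝ E where
  toAddSubmonoid := (ratSpan S).topologicalClosure.toAddSubmonoid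
  smul_mem' r x hx := by
    -- `r` is a limit of rationals, and `ratSpan S` is stable under rational scaling
    have hr : r ∈ closure (range ((↑) : ℚ → ℝ)) := Rat.denseRange_cast r
    refine map_mem_closure₂ continuous_smul hr hx ?_
    rintro _ ⟨q, rfl⟩ y hy
    exact rat_smul_mem_ratSpan S q hy

lemma span_subset_closure_ratSpan (S : Set E) :
    (Submodule.span ℝ S : Set E) ⊆ closure (ratSpan S) := by
  refine Submodule.span_le (p := ratSpanClosure S).2 fun x hx => subset_closure ?_
  exact AddSubgroup.subset_closure ⟨(1, ⟨x, hx⟩), by simp⟩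

end RatSpan

lemma NormedAddGroupHom.surjective_of_surjectiveOnWith_dense {G H : Type*}
    [NormedAddCommGroup G] [CompleteSpace G] [NormedAddCommGroup H]
    {f : NormedAddGroupHom G H} {K : AddSubgroup H} (hK : Dense (K : Set H)) {C : ℝ}
    (hC : 0 < C) (hf : f.SurjectiveOnWith K C) : Function.Surjective f := fun h =>
  let ⟨g, hg, _⟩ := controlled_closure_of_complete hC one_pos hf h (hK h)
  ⟨g, hg⟩

lemma exists_isClosed_submodule_surjOn_mkQ {X : Type*} [NormedAddCommGroup X]
    [NormedSpace ℝ X] [CompleteSpace X] (Y : Submodule ℝ X) [IsClosed (Y : Set X)]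
    {κ : Cardinal} (hκ : ℵ₀ ≤ κ) (hdens : ∃ s : Set (X ⧸ Y), Dense s ∧ #s ≤ κ) :
    ∃ Z : Submodule ℝ X, IsClosed (Z : Set X) ∧
      (∃ s : Set X, #s ≤ κ ∧ (Z : Set X) ⊆ closure s) ∧ SurjOn Y.mkQ Z univ := by
  obtain ⟨s, hs_dense, hs_card⟩ := hdens
  obtain ⟨C, hC, hlift⟩ := Y.mkQL.exists_preimage_norm_le Y.mkQ_surjective
  choose ℓ hℓ using hlift
  set K := AddSubgroup.closure s
  set L := ℓ '' K
  set Z := (Submodule.span ℝ L).topologicalClosure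
  have hZ_closed : IsClosed (Z : Set X) := Submodule.isClosed_topologicalClosure _
  have hℓ_mem (h : X ⧸ Y) (hh : h ∈ K) : ℓ h ∈ Z :=
    Submodule.le_topologicalClosure _ (Submodule.subset_span ⟨h, hh, rfl⟩)
  have hL_card : #L ≤ κ :=
    mk_image_le.trans ((AddSubgroup.cardinalMk_closure_le_max s).trans (max_le hs_card hκ))
  have : CompleteSpace Z := hZ_closed.completeSpace_coe
  let f := (Y.mkQ.comp Z.subtype).toAddMonoidHom.mkNormedAddGroupHom 1 fun x => by
    simpa using Submodule.Quotient.norm_mk_le Y (x : X)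
  have hf : f.SurjectiveOnWith K C := fun h hh =>
    ⟨⟨ℓ h, hℓ_mem h hh⟩, (hℓ h).1, (hℓ h).2⟩
  refine ⟨Z, hZ_closed, ⟨ratSpan L, ?_, ?_⟩, fun z _ => ?_⟩
  · exact (cardinalMk_ratSpan_le L).trans (max_le hL_card hκ)
  · exact closure_minimal (span_subset_closure_ratSpan L) isClosed_closure
  · obtain ⟨x, hx⟩ := NormedAddGroupHom.surjective_of_surjectiveOnWith_dense
      (hs_dense.mono AddSubgroup.subset_closure) hC hf z
    exact ⟨x, x.2, hx⟩

/-- Given a Banach space `X`, a closed subspace `Y`, and an infinite cardinal `κ` such that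
`X/Y` has a dense subset of cardinality at most `κ`, there are closed subspaces
`Y• ⊆ Y` and `X• ⊆ X` with `Y• ⊆ X•` such that `Y•` has a dense subset of cardinality at
most `κ`, the quotient map `π : X → X/Y` maps `X•` onto `X/Y`, and `X• ∩ Y = Y•`
(i.e. the kernel of the restriction of `π` to `X•` is `Y•`, so `X•/Y• = X/Y`). -/
theorem statement7
    (X : Type) [NormedAddCommGroup X] [NormedSpace ℝ X] [CompleteSpace X]
    (Y : Submodule ℝ X) (hYc : IsClosed (Y : Set X))
    (κ : Cardinal) (hκ : Cardinal.aleph0 ≤ κ)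
    (hdens : ∃ s : Set (X ⧸ Y), Dense s ∧ Cardinal.mk s ≤ κ) :
    ∃ Yb Xb : Submodule ℝ X,
      IsClosed (Yb : Set X) ∧ IsClosed (Xb : Set X) ∧
      Yb ≤ Y ∧ Yb ≤ Xb ∧
      (∃ s : Set X, s ⊆ (Yb : Set X) ∧ Cardinal.mk s ≤ κ ∧ (Yb : Set X) ⊆ closure s) ∧
      (∀ z : X ⧸ Y, ∃ x ∈ Xb, Submodule.mkQ Y x = z) ∧
      Xb ⊓ Y = Yb := by
  obtain ⟨Xb, hXb_closed, ⟨s, hs_card, hXb_sub⟩, hXb_onto⟩ :=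
    exists_isClosed_submodule_surjOn_mkQ Y hκ hdens
  obtain ⟨u, hu_sub, hu_card, hu_dense⟩ :=
    exists_subset_dense_cardinalMk_le hκ (inter_subset_left.trans hXb_sub) hs_card
  exact ⟨Xb ⊓ Y, Xb, hXb_closed.inter hYc, hXb_closed, inf_le_right, inf_le_left,
    ⟨u, hu_sub, hu_card, hu_dense⟩, fun z => hXb_onto (mem_univ z), rfl⟩
end

section
/- Let 0 → A →i B →p C → 0 and 0 → E →j X →q C → 0 be short exact sequences of real Banach spaces with the same quotient space C. Suppose that every short exact sequence of Banach spaces of the form 0 → E → W → B → 0 splits. Then there exist bounded linear operators φ : A → E and Φ : B → X such that Φ∘i = j∘φ and q∘Φ = p. -/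
open ZeroAtInfty Set

noncomputable section

/-- `(i, q)` forms a short exact sequence `0 → Y → X → Z → 0` of real normed spaces:
`i` is injective with closed range, `q` is surjective, and `ker q = range i`. -/
structure IsShortExactSeq {Y X Z : Type} [NormedAddCommGroup Y] [NormedSpace ℝ Y]
    [NormedAddCommGroup X] [NormedSpace ℝ X] [NormedAddCommGroup Z] [NormedSpace ℝ Z]
    (i : Y →L[ℝ] X) (q : X →L[ℝ] Z) : Prop where
  inj : Function.Injective i
  closedRange : IsClosed (Set.range i)
  surj : Function.Surjective q
  exact : ∀ x, q x = 0 ↔ x ∈ Set.range i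

/-- The sequence `0 → Y → X → Z → 0` splits: the range of `i` is complemented in `X`,
i.e. it is the range of a bounded linear (idempotent) projection of `X`. -/
def Splits {Y X : Type} [NormedAddCommGroup Y] [NormedSpace ℝ Y]
    [NormedAddCommGroup X] [NormedSpace ℝ X] (i : Y →L[ℝ] X) : Prop :=
  ∃ P : X →L[ℝ] X, (∀ x, P (P x) = P x) ∧ Set.range P = Set.range i

/-- `Ext(Z, Y) ≠ 0` : there exists a short exact sequence `0 → Y → E → Z → 0` of real
Banach spaces that does not split. -/
def ExtNonzero (Z Y : Type) [NormedAddCommGroup Y] [NormedSpace ℝ Y]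
    [NormedAddCommGroup Z] [NormedSpace ℝ Z] : Prop :=
  ∃ (E : Type) (_ : NormedAddCommGroup E) (_ : NormedSpace ℝ E) (_ : CompleteSpace E)
    (i : Y →L[ℝ] E) (q : E →L[ℝ] Z), IsShortExactSeq i q ∧ ¬ Splits i

/-! Pull the sequence `0 → E → X → C → 0` back along `p : B → C` to an extension
`0 → E → W → B → 0` with `W = {(b, x) | p b = q x}`. Since `Ext(B, E) = 0` this extension splits,
so its quotient map `W → B` has a bounded right inverse `s`; then `Φ := snd ∘ s` lifts `p`
through `q`. On `range i = ker p` the lift `Φ` takes values in `ker q = range j`, and `j` is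
an isomorphism onto its closed range, which gives `φ`. -/

namespace IsShortExactSeq

variable {Y X Z : Type} [NormedAddCommGroup Y] [NormedSpace ℝ Y]
  [NormedAddCommGroup X] [NormedSpace ℝ X] [NormedAddCommGroup Z] [NormedSpace ℝ Z]
  {i : Y →L[ℝ] X} {q : X →L[ℝ] Z}

theorem map_eq_zero (h : IsShortExactSeq i q) (y : Y) : q (i y) = 0 :=
  (h.exact _).2 ⟨y, rfl⟩

theorem exists_lift_of_comp_eq_zero [CompleteSpace Y] [CompleteSpace X]
    (h : IsShortExactSeq i q) {V : Type} [NormedAddCommGroup V] [NormedSpace ℝ V]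
    (f : V →L[ℝ] X) (hf : ∀ v, q (f v) = 0) : ∃ g : V →L[ℝ] Y, ∀ v, i (g v) = f v := by
  let e := i.equivRange h.inj h.closedRange
  have hf_mem : ∀ v, f v ∈ (i : Y →ₗ[ℝ] X).range := fun v => (h.exact _).1 (hf v)
  refine ⟨(e.symm : _ →L[ℝ] Y) ∘L f.codRestrict _ hf_mem, fun v => ?_⟩
  exact congrArg Subtype.val (e.apply_symm_apply ⟨f v, hf_mem v⟩)

theorem exists_rightInverse_of_splits [CompleteSpace X] [CompleteSpace Z]
    (h : IsShortExactSeq i q) (hs : Splits i) : ∃ s : Z →L[ℝ] X, ∀ z, q (s z) = z := by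
  obtain ⟨P, hPP, hP⟩ := hs
  have hqP : ∀ x, q (P x) = 0 := fun x => (h.exact _).2 (hP ▸ ⟨x, rfl⟩)
  let K := LinearMap.ker (P : X →ₗ[ℝ] X)
  have : CompleteSpace K := P.isClosed_ker.completeSpace_coe
  let qK : K →L[ℝ] Z := q ∘L K.subtypeL
  have hinj : LinearMap.ker (qK : K →ₗ[ℝ] Z) = ⊥ := by
    refine LinearMap.ker_eq_bot'.2 fun k hk => ?_
    obtain ⟨x, hx⟩ : (k : X) ∈ Set.range P := hP ▸ (h.exact _).1 hk
    have hPk : P k = 0 := k.2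
    refine Subtype.ext ?_
    calc (k : X) = P (P x) := by rw [hPP, hx]
      _ = 0 := by rw [hx, hPk]
  have hsurj : LinearMap.range (qK : K →ₗ[ℝ] Z) = ⊤ := by
    refine LinearMap.range_eq_top.2 fun z => ?_
    obtain ⟨x, rfl⟩ := h.surj z
    refine ⟨⟨x - P x, LinearMap.mem_ker.2 ?_⟩, ?_⟩
    · rw [ContinuousLinearMap.coe_coe, map_sub, hPP, sub_self]
    · change q (x - P x) = q x
      rw [map_sub, hqP, sub_zero]
  let e := ContinuousLinearEquiv.ofBijective qK hinj hsurj
  exact ⟨K.subtypeL ∘L (e.symm : Z →L[ℝ] K), e.apply_symm_apply⟩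

end IsShortExactSeq

section Pullback

variable {B C X : Type} [NormedAddCommGroup B] [NormedSpace ℝ B]
  [NormedAddCommGroup C] [NormedSpace ℝ C] [NormedAddCommGroup X] [NormedSpace ℝ X]

def pullback (p : B →L[ℝ] C) (q : X →L[ℝ] C) : Submodule ℝ (B × X) :=
  LinearMap.eqLocus (p ∘L ContinuousLinearMap.fst ℝ B X : B × X →ₗ[ℝ] C)
    (q ∘L ContinuousLinearMap.snd ℝ B X)

theorem mem_pullback {p : B →L[ℝ] C} {q : X →L[ℝ] C} {w : B × X} :
    w ∈ pullback p q ↔ p w.1 = q w.2 :=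
  Iff.rfl

instance [CompleteSpace B] [CompleteSpace X] (p : B →L[ℝ] C) (q : X →L[ℝ] C) :
    CompleteSpace (pullback p q) :=
  (isClosed_eq (p.continuous.comp continuous_fst) (q.continuous.comp continuous_snd) :
    IsClosed (pullback p q : Set (B × X))).completeSpace_coe

def pullback.fst (p : B →L[ℝ] C) (q : X →L[ℝ] C) : pullback p q →L[ℝ] B :=
  ContinuousLinearMap.fst ℝ B X ∘L (pullback p q).subtypeL

def pullback.snd (p : B →L[ℝ] C) (q : X →L[ℝ] C) : pullback p q →L[ℝ] X :=
  ContinuousLinearMap.snd ℝ B X ∘L (pullback p q).subtypeL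

theorem pullback.map_snd (p : B →L[ℝ] C) (q : X →L[ℝ] C) (w : pullback p q) :
    q (pullback.snd p q w) = p (pullback.fst p q w) :=
  w.2.symm

variable {E : Type} [NormedAddCommGroup E] [NormedSpace ℝ E]

def pullback.inr (p : B →L[ℝ] C) {j : E →L[ℝ] X} {q : X →L[ℝ] C} (hjq : ∀ e, q (j e) = 0) :
    E →L[ℝ] pullback p q :=
  ((0 : E →L[ℝ] B).prod j).codRestrict _ fun e => mem_pullback.2 (by simp [hjq])

theorem isShortExactSeq_pullback (p : B →L[ℝ] C) {j : E →L[ℝ] X} {q : X →L[ℝ] C}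
    (h : IsShortExactSeq j q) :
    IsShortExactSeq (pullback.inr p h.map_eq_zero) (pullback.fst p q) := by
  have hexact : ∀ w, pullback.fst p q w = 0 ↔ w ∈ Set.range (pullback.inr p h.map_eq_zero) := by
    rintro ⟨⟨b, x⟩, hw⟩
    refine ⟨fun hb => ?_, ?_⟩
    · replace hb : b = 0 := hb
      obtain ⟨e, he⟩ := (h.exact x).1 (by rw [← mem_pullback.1 hw, hb, map_zero])
      exact ⟨e, Subtype.ext (Prod.ext hb.symm he)⟩
    · rintro ⟨e, he⟩
      exact congrArg (fun w : pullback p q => w.1.1) he.symm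
  refine ⟨fun e₁ e₂ he => h.inj (congrArg (fun w : pullback p q => w.1.2) he), ?_, ?_, hexact⟩
  · rw [show Set.range _ = pullback.fst p q ⁻¹' {0} from Set.ext fun w => (hexact w).symm]
    exact isClosed_singleton.preimage (pullback.fst p q).continuous
  · intro b
    obtain ⟨x, hx⟩ := h.surj (p b)
    exact ⟨⟨(b, x), mem_pullback.2 hx.symm⟩, rfl⟩

end Pullback

theorem statement8_general
    (A B C E X : Type)
    [NormedAddCommGroup A] [NormedSpace ℝ A]
    [NormedAddCommGroup B] [NormedSpace ℝ B] [CompleteSpace B]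
    [NormedAddCommGroup C] [NormedSpace ℝ C]
    [NormedAddCommGroup E] [NormedSpace ℝ E] [CompleteSpace E]
    [NormedAddCommGroup X] [NormedSpace ℝ X] [CompleteSpace X]
    (i : A →L[ℝ] B) (p : B →L[ℝ] C) (h₁ : IsShortExactSeq i p)
    (j : E →L[ℝ] X) (q : X →L[ℝ] C) (h₂ : IsShortExactSeq j q)
    (hext : ∀ (W : Type) [NormedAddCommGroup W] [NormedSpace ℝ W] [CompleteSpace W]
      (j' : E →L[ℝ] W) (p' : W →L[ℝ] B), IsShortExactSeq j' p' → Splits j') :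
    ∃ (φ : A →L[ℝ] E) (Φ : B →L[ℝ] X),
      (∀ a, Φ (i a) = j (φ a)) ∧ (∀ b, q (Φ b) = p b) := by
  have hW := isShortExactSeq_pullback p h₂
  obtain ⟨s, hs⟩ := hW.exists_rightInverse_of_splits (hext _ _ _ hW)
  let Φ := pullback.snd p q ∘L s
  have hΦ : ∀ b, q (Φ b) = p b := fun b => by
    simp only [Φ, ContinuousLinearMap.comp_apply, pullback.map_snd, hs]
  obtain ⟨φ, hφ⟩ := h₂.exists_lift_of_comp_eq_zero (Φ ∘L i) fun a => by
    simp only [ContinuousLinearMap.comp_apply, hΦ, h₁.map_eq_zero]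
  exact ⟨φ, Φ, fun a => (hφ a).symm, hΦ⟩

/-- Given exact sequences `0 → A →i B →p C → 0` and `0 → E →j X →q C → 0`, if
`Ext(B, E) = 0` (every exact sequence `0 → E → W → B → 0` splits), then there are
operators `φ : A → E` and `Φ : B → X` with `Φ ∘ i = j ∘ φ` and `q ∘ Φ = p`. -/
theorem statement8
    (A B C E X : Type)
    [NormedAddCommGroup A] [NormedSpace ℝ A] [CompleteSpace A]
    [NormedAddCommGroup B] [NormedSpace ℝ B] [CompleteSpace B]
    [NormedAddCommGroup C] [NormedSpace ℝ C] [CompleteSpace C]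
    [NormedAddCommGroup E] [NormedSpace ℝ E] [CompleteSpace E]
    [NormedAddCommGroup X] [NormedSpace ℝ X] [CompleteSpace X]
    (i : A →L[ℝ] B) (p : B →L[ℝ] C) (h₁ : IsShortExactSeq i p)
    (j : E →L[ℝ] X) (q : X →L[ℝ] C) (h₂ : IsShortExactSeq j q)
    (hext : ∀ (W : Type) [NormedAddCommGroup W] [NormedSpace ℝ W] [CompleteSpace W]
      (j' : E →L[ℝ] W) (p' : W →L[ℝ] B), IsShortExactSeq j' p' → Splits j') :
    ∃ (φ : A →L[ℝ] E) (Φ : B →L[ℝ] X),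
      (∀ a, Φ (i a) = j (φ a)) ∧ (∀ b, q (Φ b) = p b) :=
  statement8_general A B C E X i p h₁ j q h₂ hext
end
end
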